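/- arXiv:1903.00109 — 3 statements merged into one kernel-verified Lean document; each statement's English description precedes it below -/
import Mathlib

section
/- For L > 0 and a ∈ (0,1), define f_a(x) = log(x/L + a) · exp(-x/L) for x ≥ 0. Then ∫₀^∞ x f_a′(x)² dx = -log a + O(1) as a → 0⁺, i.e. there exist constants C, a₀ > 0 such that for all 0 < a < a₀, |∫₀^∞ x f_a′(x)² dx + log a| ≤ C. -/
open MeasureTheory Real Set Filter

namespace IntegralDerivAux

/-- A dominating function for the error terms, independent of `a`. -/
noncomputable def domF : ℝ → ℝ := fun u =>
  2 * Real.exp (-2 * u) * (|Real.log u| + u) + u * Real.exp (-2 * u) * (|Real.log u| + u) ^ 2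

lemma domF_nonneg {u : ℝ} (hu : 0 < u) : 0 ≤ domF u := by
  have h1 : (0:ℝ) ≤ |Real.log u| + u := by positivity
  have h2 : (0:ℝ) ≤ Real.exp (-2 * u) := (Real.exp_pos _).le
  unfold domF
  positivity

lemma contOn_domF : ContinuousOn domF (Set.Ioi (0:ℝ)) := by
  have hlog : ContinuousOn (fun u : ℝ => |Real.log u|) (Set.Ioi (0:ℝ)) := by
    apply ContinuousOn.abs
    apply Real.continuousOn_log.mono
    intro x hx
    simpa using (ne_of_gt hx)
  have hexp : Continuous fun u : ℝ => Real.exp (-2 * u) := by fun_prop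
  exact ((continuousOn_const.mul hexp.continuousOn).mul
      (hlog.add continuousOn_id)).add
    ((continuousOn_id.mul hexp.continuousOn).mul ((hlog.add continuousOn_id).pow 2))

lemma abs_log_le_rpow {u : ℝ} (hu : 0 < u) (hu1 : u ≤ 1) :
    |Real.log u| ≤ 2 * u ^ (-(1/2) : ℝ) := by
  have hl : Real.log u ≤ 0 := Real.log_nonpos hu.le hu1
  rw [abs_of_nonpos hl]
  have h1 : Real.log (u ^ (-(1/2) : ℝ)) = (-(1/2) : ℝ) * Real.log u := Real.log_rpow hu _
  have h2 : Real.log (u ^ (-(1/2) : ℝ)) ≤ u ^ (-(1/2) : ℝ) := by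
    have hp : (0:ℝ) < u ^ (-(1/2) : ℝ) := Real.rpow_pos_of_pos hu _
    linarith [Real.log_le_sub_one_of_pos hp]
  nlinarith

lemma rpow_neg_half_sq {u : ℝ} (hu : 0 < u) : (u ^ (-(1/2) : ℝ)) ^ 2 * u = 1 := by
  have : (u ^ (-(1/2) : ℝ)) ^ 2 = u ^ ((-(1/2) : ℝ) * 2) := by
    rw [← Real.rpow_natCast (u ^ (-(1/2):ℝ)) 2, ← Real.rpow_mul hu.le]
    norm_num
  rw [this]
  have : ((-(1/2) : ℝ) * 2) = -1 := by norm_num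
  rw [this, Real.rpow_neg_one]
  field_simp

lemma domF_integrable : IntegrableOn domF (Set.Ioi (0:ℝ)) := by
  have hsplit : Set.Ioc (0:ℝ) 1 ∪ Set.Ioi 1 = Set.Ioi 0 := Set.Ioc_union_Ioi_eq_Ioi zero_le_one
  rw [← hsplit]
  apply IntegrableOn.union
  · -- on Ioc 0 1, dominated by 4 * u^(-1/2) + 12
    have hk : IntegrableOn (fun u : ℝ => 4 * u ^ (-(1/2) : ℝ) + 12) (Set.Ioc 0 1) := by
      rw [← intervalIntegrable_iff_integrableOn_Ioc_of_le zero_le_one]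
      exact ((intervalIntegral.intervalIntegrable_rpow' (by norm_num)).const_mul 4).add
        intervalIntegrable_const
    apply Integrable.mono' hk
    · exact (contOn_domF.mono Set.Ioc_subset_Ioi_self).aestronglyMeasurable measurableSet_Ioc
    · filter_upwards [ae_restrict_mem measurableSet_Ioc] with u hu
      obtain ⟨hu0, hu1⟩ := hu
      rw [Real.norm_eq_abs, abs_of_nonneg (domF_nonneg hu0)]
      set s := u ^ (-(1/2) : ℝ) with hs
      have hs0 : 0 ≤ s := (Real.rpow_pos_of_pos hu0 _).le
      have hls : |Real.log u| ≤ 2 * s := abs_log_le_rpow hu0 hu1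
      have hs2 : s ^ 2 * u = 1 := rpow_neg_half_sq hu0
      have hus : u * s ≤ 1 := by nlinarith [sq_nonneg (u * s - 1)]
      have he1 : Real.exp (-2 * u) ≤ 1 := Real.exp_le_one_iff.mpr (by linarith)
      have he0 : 0 ≤ Real.exp (-2 * u) := (Real.exp_pos _).le
      have hl0 : 0 ≤ |Real.log u| := abs_nonneg _
      unfold domF
      have hm : |Real.log u| + u ≤ 2 * s + 1 := by linarith
      have hm0 : 0 ≤ |Real.log u| + u := by linarith
      have ht1 : 2 * Real.exp (-2 * u) * (|Real.log u| + u) ≤ 2 * (2 * s + 1) := by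
        nlinarith
      have hmsq : (|Real.log u| + u) ^ 2 ≤ (2 * s + 1) ^ 2 := pow_le_pow_left₀ hm0 hm 2
      have ht2 : u * Real.exp (-2 * u) * (|Real.log u| + u) ^ 2 ≤ u * (2 * s + 1) ^ 2 := by
        calc u * Real.exp (-2 * u) * (|Real.log u| + u) ^ 2
            = u * (|Real.log u| + u) ^ 2 * Real.exp (-2 * u) := by ring
          _ ≤ u * (|Real.log u| + u) ^ 2 * 1 :=
              mul_le_mul_of_nonneg_left he1 (by positivity)
          _ = u * (|Real.log u| + u) ^ 2 := by ring
          _ ≤ u * (2 * s + 1) ^ 2 := mul_le_mul_of_nonneg_left hmsq hu0.le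
      have ht3 : u * (2 * s + 1) ^ 2 ≤ 9 := by
        have hexpand : u * (2 * s + 1) ^ 2 = 4 * (s ^ 2 * u) + 4 * (u * s) + u := by ring
        rw [hexpand, hs2]
        linarith
      linarith
  · -- on Ioi 1, dominated by 112 * exp (-u)
    have hk : IntegrableOn (fun u : ℝ => 112 * Real.exp (-1 * u)) (Set.Ioi 1) :=
      (exp_neg_integrableOn_Ioi 1 one_pos).const_mul 112
    apply Integrable.mono' hk
    · exact (contOn_domF.mono (t := Set.Ioi (1:ℝ)) fun x hx => (lt_trans one_pos hx : (0:ℝ) < x)).aestronglyMeasurable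
        measurableSet_Ioi
    · filter_upwards [ae_restrict_mem measurableSet_Ioi] with u hu
      have hu1 : 1 < u := hu
      have hu0 : (0:ℝ) < u := lt_trans one_pos hu1
      rw [Real.norm_eq_abs, abs_of_nonneg (domF_nonneg hu0)]
      have hlu : |Real.log u| = Real.log u := abs_of_nonneg (Real.log_nonneg hu1.le)
      have hlu2 : Real.log u ≤ u := by
        linarith [Real.log_le_sub_one_of_pos hu0]
      have hm : |Real.log u| + u ≤ 2 * u := by rw [hlu]; linarith
      have hm0 : 0 ≤ |Real.log u| + u := by positivity
      have he0 : 0 ≤ Real.exp (-2 * u) := (Real.exp_pos _).le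
      have hue : u * Real.exp (-2 * u) ≤ Real.exp (-1 * u) := by
        have h1 : u ≤ Real.exp u := by linarith [Real.add_one_le_exp u]
        have h2 : u * Real.exp (-2 * u) ≤ Real.exp u * Real.exp (-2 * u) :=
          mul_le_mul_of_nonneg_right h1 he0
        rw [← Real.exp_add] at h2
        have : u + -2 * u = -1 * u := by ring
        rwa [this] at h2
      have hu3e : u ^ 3 * Real.exp (-2 * u) ≤ 27 * Real.exp (-1 * u) := by
        have h1 : u ≤ 3 * Real.exp (u / 3) := by
          have := Real.add_one_le_exp (u / 3)
          nlinarith [Real.exp_pos (u / 3)]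
        have h2 : u ^ 3 ≤ 27 * Real.exp (u / 3) ^ 3 := by
          have := pow_le_pow_left₀ hu0.le h1 3
          calc u ^ 3 ≤ (3 * Real.exp (u / 3)) ^ 3 := this
            _ = 27 * Real.exp (u / 3) ^ 3 := by ring
        have h3 : Real.exp (u / 3) ^ 3 = Real.exp u := by
          rw [← Real.exp_nat_mul]
          congr 1
          push_cast
          ring
        rw [h3] at h2
        have h4 : u ^ 3 * Real.exp (-2 * u) ≤ 27 * Real.exp u * Real.exp (-2 * u) :=
          mul_le_mul_of_nonneg_right h2 he0
        calc u ^ 3 * Real.exp (-2 * u) ≤ 27 * Real.exp u * Real.exp (-2 * u) := h4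
          _ = 27 * Real.exp (-1 * u) := by rw [mul_assoc, ← Real.exp_add]; ring_nf
      unfold domF
      have ht1 : 2 * Real.exp (-2 * u) * (|Real.log u| + u) ≤ 4 * Real.exp (-1 * u) := by
        nlinarith
      have ht2 : u * Real.exp (-2 * u) * (|Real.log u| + u) ^ 2 ≤ 108 * Real.exp (-1 * u) := by
        have h5 : (|Real.log u| + u) ^ 2 ≤ 4 * u ^ 2 := by nlinarith
        have h6 : u * Real.exp (-2 * u) * (|Real.log u| + u) ^ 2
            ≤ u * Real.exp (-2 * u) * (4 * u ^ 2) := by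
          apply mul_le_mul_of_nonneg_left h5 (by positivity)
        have h7 : u * Real.exp (-2 * u) * (4 * u ^ 2) = 4 * (u ^ 3 * Real.exp (-2 * u)) := by
          ring
        nlinarith
      linarith

lemma abs_log_add_le {a u : ℝ} (ha : 0 < a) (ha1 : a ≤ 1) (hu : 0 < u) :
    |Real.log (u + a)| ≤ |Real.log u| + u := by
  rcases le_or_gt (u + a) 1 with h | h
  · have hu1 : u ≤ 1 := by linarith
    have hlua : Real.log (u + a) ≤ 0 := Real.log_nonpos (by positivity) h
    have hlu : Real.log u ≤ Real.log (u + a) := by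
      apply Real.log_le_log hu
      linarith
    have hlu0 : Real.log u ≤ 0 := Real.log_nonpos hu.le hu1
    rw [abs_of_nonpos hlua, abs_of_nonpos hlu0]
    linarith
  · have hlua : 0 ≤ Real.log (u + a) := Real.log_nonneg h.le
    rw [abs_of_nonneg hlua]
    have := Real.log_le_sub_one_of_pos (show (0:ℝ) < u + a by positivity)
    have : Real.log (u + a) ≤ u := by linarith
    linarith [abs_nonneg (Real.log u)]


section FixedA

variable {a : ℝ}

lemma contOn_inv_add (ha : 0 < a) : ContinuousOn (fun u : ℝ => (u + a)⁻¹) (Set.Ici 0) := by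
  apply ContinuousOn.inv₀ (by fun_prop)
  intro x hx
  have : (0:ℝ) ≤ x := hx
  positivity

lemma contOn_log_add (ha : 0 < a) : ContinuousOn (fun u : ℝ => Real.log (u + a)) (Set.Ici 0) := by
  apply Real.continuousOn_log.comp (by fun_prop : ContinuousOn (fun u : ℝ => u + a) (Set.Ici 0))
  intro x hx
  have : (0:ℝ) ≤ x := hx
  simp only [Set.mem_compl_iff, Set.mem_singleton_iff]
  positivity

lemma P_integrable (ha : 0 < a) :
    IntegrableOn (fun u : ℝ => Real.exp (-2 * u) * (u + a)⁻¹) (Set.Ioi 0) := by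
  have hexp2 : IntegrableOn (fun u : ℝ => Real.exp (-2 * u)) (Set.Ioi (0:ℝ)) :=
    exp_neg_integrableOn_Ioi 0 two_pos
  apply Integrable.mono' (hexp2.const_mul a⁻¹)
  · exact (((Real.continuous_exp.comp (by fun_prop)).continuousOn).mul
      ((contOn_inv_add ha).mono Set.Ioi_subset_Ici_self)).aestronglyMeasurable measurableSet_Ioi
  · filter_upwards [ae_restrict_mem measurableSet_Ioi] with u hu
    have hu0 : (0:ℝ) < u := hu
    have h1 : (u + a)⁻¹ ≤ a⁻¹ := by
      apply inv_anti₀ ha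
      linarith
    have h2 : (0:ℝ) < (u + a)⁻¹ := by positivity
    rw [Real.norm_eq_abs, abs_of_nonneg (by positivity)]
    calc Real.exp (-2 * u) * (u + a)⁻¹ ≤ Real.exp (-2 * u) * a⁻¹ :=
          mul_le_mul_of_nonneg_left h1 (Real.exp_pos _).le
      _ = a⁻¹ * Real.exp (-2 * u) := by ring

lemma Q_integrable (ha : 0 < a) :
    IntegrableOn (fun u : ℝ => a * Real.exp (-2 * u) * ((u + a) ^ 2)⁻¹) (Set.Ioi 0) := by
  have hexp2 : IntegrableOn (fun u : ℝ => Real.exp (-2 * u)) (Set.Ioi (0:ℝ)) :=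
    exp_neg_integrableOn_Ioi 0 two_pos
  apply Integrable.mono' (hexp2.const_mul a⁻¹)
  · apply ContinuousOn.aestronglyMeasurable _ measurableSet_Ioi
    apply ContinuousOn.mul (by fun_prop)
    apply ContinuousOn.inv₀ (by fun_prop)
    intro x hx
    have : (0:ℝ) < x := hx
    positivity
  · filter_upwards [ae_restrict_mem measurableSet_Ioi] with u hu
    have hu0 : (0:ℝ) < u := hu
    have h1 : ((u + a) ^ 2)⁻¹ ≤ (a ^ 2)⁻¹ := by
      apply inv_anti₀ (by positivity)
      nlinarith
    rw [Real.norm_eq_abs, abs_of_nonneg (by positivity)]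
    calc a * Real.exp (-2 * u) * ((u + a) ^ 2)⁻¹ ≤ a * Real.exp (-2 * u) * (a ^ 2)⁻¹ :=
          mul_le_mul_of_nonneg_left h1 (by positivity)
      _ = a⁻¹ * Real.exp (-2 * u) := by field_simp

lemma R_bound (ha : 0 < a) (ha1 : a ≤ 1) {u : ℝ} (hu : 0 < u) :
    |u * Real.exp (-2 * u) *
        (Real.log (u + a) ^ 2 - 2 * (u + a)⁻¹ * Real.log (u + a))| ≤ domF u := by
  have hua : (0:ℝ) < u + a := by positivity
  have hA0 : (0:ℝ) ≤ (u + a)⁻¹ := by positivity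
  have hlB : |Real.log (u + a)| ≤ |Real.log u| + u := abs_log_add_le ha ha1 hu
  have hB0 : (0:ℝ) ≤ |Real.log (u + a)| := abs_nonneg _
  have he0 : (0:ℝ) ≤ Real.exp (-2 * u) := (Real.exp_pos _).le
  have huA : u * (u + a)⁻¹ ≤ 1 := by
    rw [← mul_inv_cancel₀ (ne_of_gt hua)]
    apply mul_le_mul_of_nonneg_right (by linarith) hA0
  have h1 : |Real.log (u + a) ^ 2 - 2 * (u + a)⁻¹ * Real.log (u + a)|
      ≤ Real.log (u + a) ^ 2 + 2 * (u + a)⁻¹ * |Real.log (u + a)| := by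
    calc |Real.log (u + a) ^ 2 - 2 * (u + a)⁻¹ * Real.log (u + a)|
        ≤ |Real.log (u + a) ^ 2| + |2 * (u + a)⁻¹ * Real.log (u + a)| := abs_sub _ _
      _ = Real.log (u + a) ^ 2 + 2 * (u + a)⁻¹ * |Real.log (u + a)| := by
          rw [abs_of_nonneg (sq_nonneg _), abs_mul, abs_of_nonneg (by positivity : (0:ℝ) ≤ 2 * (u + a)⁻¹)]
  rw [abs_mul, abs_of_nonneg (by positivity : (0:ℝ) ≤ u * Real.exp (-2 * u))]
  have h2 : u * Real.exp (-2 * u) *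
      |Real.log (u + a) ^ 2 - 2 * (u + a)⁻¹ * Real.log (u + a)|
      ≤ u * Real.exp (-2 * u) * (Real.log (u + a) ^ 2 + 2 * (u + a)⁻¹ * |Real.log (u + a)|) :=
    mul_le_mul_of_nonneg_left h1 (by positivity)
  have h3 : Real.log (u + a) ^ 2 ≤ (|Real.log u| + u) ^ 2 := by
    rw [← sq_abs]
    exact pow_le_pow_left₀ hB0 hlB 2
  have h4 : u * Real.exp (-2 * u) * Real.log (u + a) ^ 2
      ≤ u * Real.exp (-2 * u) * (|Real.log u| + u) ^ 2 :=
    mul_le_mul_of_nonneg_left h3 (by positivity)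
  have h5 : u * Real.exp (-2 * u) * (2 * (u + a)⁻¹ * |Real.log (u + a)|)
      ≤ 2 * Real.exp (-2 * u) * (|Real.log u| + u) := by
    calc u * Real.exp (-2 * u) * (2 * (u + a)⁻¹ * |Real.log (u + a)|)
        = 2 * Real.exp (-2 * u) * (u * (u + a)⁻¹) * |Real.log (u + a)| := by ring
      _ ≤ 2 * Real.exp (-2 * u) * 1 * |Real.log (u + a)| := by
          apply mul_le_mul_of_nonneg_right _ hB0
          exact mul_le_mul_of_nonneg_left huA (by positivity)
      _ = 2 * Real.exp (-2 * u) * |Real.log (u + a)| := by ring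
      _ ≤ 2 * Real.exp (-2 * u) * (|Real.log u| + u) :=
          mul_le_mul_of_nonneg_left hlB (by positivity)
  unfold domF
  nlinarith [h2, h4, h5]

lemma R_integrable (ha : 0 < a) (ha1 : a ≤ 1) :
    IntegrableOn (fun u : ℝ => u * Real.exp (-2 * u) *
      (Real.log (u + a) ^ 2 - 2 * (u + a)⁻¹ * Real.log (u + a))) (Set.Ioi 0) := by
  apply Integrable.mono' domF_integrable
  · apply ContinuousOn.aestronglyMeasurable _ measurableSet_Ioi
    apply ContinuousOn.mul (by fun_prop)
    apply ContinuousOn.sub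
    · exact (((contOn_log_add ha).mono Set.Ioi_subset_Ici_self).pow 2)
    · exact (continuousOn_const.mul ((contOn_inv_add ha).mono Set.Ioi_subset_Ici_self)).mul
        ((contOn_log_add ha).mono Set.Ioi_subset_Ici_self)
  · filter_upwards [ae_restrict_mem measurableSet_Ioi] with u hu
    exact R_bound ha ha1 hu

end FixedA


section FixedA2

variable {a : ℝ}

lemma Qbar_deriv (ha : 0 < a) : ∀ x ∈ Set.Ioi (0:ℝ),
    HasDerivAt (fun u : ℝ => -(a * (u + a)⁻¹)) (a * ((x + a) ^ 2)⁻¹) x := by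
  intro x hx
  have hx0 : (0:ℝ) < x := hx
  have h0 : x + a ≠ 0 := by positivity
  have h : HasDerivAt (fun u : ℝ => -(a * (u + a)⁻¹)) _ x := ((((hasDerivAt_id x).add_const a).inv h0).const_mul a).neg
  convert h using 1
  simp only [id]; ring

lemma Qbar_tendsto (ha : 0 < a) :
    Tendsto (fun u : ℝ => -(a * (u + a)⁻¹)) atTop (nhds 0) := by
  have h1 : Tendsto (fun u : ℝ => (u + a)⁻¹) atTop (nhds 0) :=
    tendsto_inv_atTop_zero.comp (tendsto_atTop_add_const_right _ a tendsto_id)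
  have := (h1.const_mul a).neg
  simpa using this

lemma Qbar_cont (ha : 0 < a) :
    ContinuousWithinAt (fun u : ℝ => -(a * (u + a)⁻¹)) (Set.Ici 0) 0 := by
  apply ContinuousAt.continuousWithinAt
  have h0 : (0:ℝ) + a ≠ 0 := by positivity
  exact ((continuousAt_const.mul ((continuousAt_id.add continuousAt_const).inv₀ h0))).neg

lemma Qbar_nonneg (ha : 0 < a) : ∀ x ∈ Set.Ioi (0:ℝ), 0 ≤ a * ((x + a) ^ 2)⁻¹ := by
  intro x hx
  have hx0 : (0:ℝ) < x := hx
  positivity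

lemma Qbar_integrable (ha : 0 < a) :
    IntegrableOn (fun x : ℝ => a * ((x + a) ^ 2)⁻¹) (Set.Ioi 0) :=
  integrableOn_Ioi_deriv_of_nonneg (Qbar_cont ha) (Qbar_deriv ha) (Qbar_nonneg ha)
    (Qbar_tendsto ha)

lemma Qbar_value (ha : 0 < a) : ∫ x in Set.Ioi (0:ℝ), a * ((x + a) ^ 2)⁻¹ = 1 := by
  rw [integral_Ioi_of_hasDerivAt_of_nonneg (Qbar_cont ha) (Qbar_deriv ha) (Qbar_nonneg ha)
    (Qbar_tendsto ha)]
  field_simp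
  ring

lemma Q_le_one (ha : 0 < a) :
    (∫ u in Set.Ioi (0:ℝ), a * Real.exp (-2 * u) * ((u + a) ^ 2)⁻¹) ≤ 1 := by
  rw [← Qbar_value ha]
  apply setIntegral_mono_on (Q_integrable ha) (Qbar_integrable ha) measurableSet_Ioi
  intro u hu
  have hu0 : (0:ℝ) < u := hu
  have he1 : Real.exp (-2 * u) ≤ 1 := Real.exp_le_one_iff.mpr (by linarith)
  have h0 : (0:ℝ) ≤ a * ((u + a) ^ 2)⁻¹ := by positivity
  calc a * Real.exp (-2 * u) * ((u + a) ^ 2)⁻¹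
      = Real.exp (-2 * u) * (a * ((u + a) ^ 2)⁻¹) := by ring
    _ ≤ 1 * (a * ((u + a) ^ 2)⁻¹) := mul_le_mul_of_nonneg_right he1 h0
    _ = a * ((u + a) ^ 2)⁻¹ := by ring

lemma P_tail_le_one (ha : 0 < a) :
    (∫ u in Set.Ioi (1:ℝ), Real.exp (-2 * u) * (u + a)⁻¹) ≤ 1 := by
  have hExpInt : IntegrableOn (fun u : ℝ => Real.exp (-u)) (Set.Ioi (1:ℝ)) := by
    have := exp_neg_integrableOn_Ioi 1 (one_pos)
    simpa using this
  have h1 : (∫ u in Set.Ioi (1:ℝ), Real.exp (-2 * u) * (u + a)⁻¹)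
      ≤ ∫ u in Set.Ioi (1:ℝ), Real.exp (-u) := by
    apply setIntegral_mono_on ((P_integrable ha).mono_set (Set.Ioi_subset_Ioi zero_le_one))
      hExpInt measurableSet_Ioi
    intro u hu
    have hu1 : (1:ℝ) < u := hu
    have hinv : (u + a)⁻¹ ≤ 1 := by
      rw [inv_le_one_iff₀]
      right
      linarith
    have hee : Real.exp (-2 * u) ≤ Real.exp (-u) := by
      apply Real.exp_le_exp.mpr
      linarith
    calc Real.exp (-2 * u) * (u + a)⁻¹ ≤ Real.exp (-2 * u) * 1 :=
          mul_le_mul_of_nonneg_left hinv (Real.exp_pos _).le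
      _ = Real.exp (-2 * u) := by ring
      _ ≤ Real.exp (-u) := hee
  have h2 : (∫ u in Set.Ioi (1:ℝ), Real.exp (-u)) = Real.exp (-1) := integral_exp_neg_Ioi 1
  rw [h2] at h1
  have : Real.exp (-1) ≤ 1 := Real.exp_le_one_iff.mpr (by norm_num)
  linarith

lemma P_head_est (ha : 0 < a) (ha1 : a ≤ 1) :
    |(∫ u in Set.Ioc (0:ℝ) 1, Real.exp (-2 * u) * (u + a)⁻¹) + Real.log a| ≤ 3 := by
  have hIcc : Set.uIcc (0:ℝ) 1 = Set.Icc 0 1 := Set.uIcc_of_le zero_le_one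
  have hIccIci : Set.Icc (0:ℝ) 1 ⊆ Set.Ici 0 := Set.Icc_subset_Ici_self
  have hInvInt : IntervalIntegrable (fun u : ℝ => (u + a)⁻¹) volume 0 1 := by
    apply ContinuousOn.intervalIntegrable
    rw [hIcc]
    exact (contOn_inv_add ha).mono hIccIci
  have hRemInt : IntervalIntegrable
      (fun u : ℝ => (Real.exp (-2 * u) - 1) * (u + a)⁻¹) volume 0 1 := by
    apply ContinuousOn.intervalIntegrable
    rw [hIcc]
    exact (((Real.continuous_exp.comp (by fun_prop)).continuousOn).sub
      continuousOn_const).mul ((contOn_inv_add ha).mono hIccIci)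
  have hI1 : (∫ u in (0:ℝ)..1, (u + a)⁻¹) = Real.log (1 + a) - Real.log a := by
    have hcomp := intervalIntegral.integral_comp_add_right (a := (0:ℝ)) (b := 1)
      (fun x : ℝ => x⁻¹) a
    have h0 : (0:ℝ) ∉ Set.uIcc a (1 + a) := by
      rw [Set.uIcc_of_le (by linarith)]
      intro h
      have := h.1
      linarith
    rw [show (fun u : ℝ => (u + a)⁻¹) = (fun u : ℝ => (fun x : ℝ => x⁻¹) (u + a)) from rfl,
      hcomp, zero_add, integral_inv h0, Real.log_div (by positivity) (ne_of_gt ha)]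
  have hI2 : |∫ u in (0:ℝ)..1, (Real.exp (-2 * u) - 1) * (u + a)⁻¹| ≤ 2 := by
    have hb : ∀ x ∈ Set.uIoc (0:ℝ) 1, ‖(Real.exp (-2 * x) - 1) * (x + a)⁻¹‖ ≤ 2 := by
      intro x hx
      rw [Set.uIoc_of_le zero_le_one] at hx
      obtain ⟨hx0, hx1⟩ := hx
      have hxa : (0:ℝ) < x + a := by positivity
      have hA : (0:ℝ) < (x + a)⁻¹ := by positivity
      have hexp1 : Real.exp (-2 * x) ≤ 1 := Real.exp_le_one_iff.mpr (by linarith)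
      have hexp2 : 1 - Real.exp (-2 * x) ≤ 2 * x := by
        linarith [Real.add_one_le_exp (-2 * x)]
      have habs : |Real.exp (-2 * x) - 1| ≤ 2 * x := by
        rw [abs_of_nonpos (by linarith)]
        linarith
      rw [Real.norm_eq_abs, abs_mul, abs_of_nonneg hA.le]
      have h2x : 2 * x * (x + a)⁻¹ ≤ 2 := by
        have h := mul_inv_cancel₀ (ne_of_gt hxa)
        have : x * (x + a)⁻¹ ≤ (x + a) * (x + a)⁻¹ :=
          mul_le_mul_of_nonneg_right (by linarith) hA.le
        rw [h] at this
        linarith [mul_le_mul_of_nonneg_right (le_refl (2:ℝ)) (mul_nonneg hx0.le hA.le)]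
      calc |Real.exp (-2 * x) - 1| * (x + a)⁻¹ ≤ 2 * x * (x + a)⁻¹ :=
            mul_le_mul_of_nonneg_right habs hA.le
        _ ≤ 2 := h2x
    have := intervalIntegral.norm_integral_le_of_norm_le_const hb
    simpa using this
  have hsum : (∫ u in (0:ℝ)..1, Real.exp (-2 * u) * (u + a)⁻¹)
      = (∫ u in (0:ℝ)..1, (u + a)⁻¹)
        + ∫ u in (0:ℝ)..1, (Real.exp (-2 * u) - 1) * (u + a)⁻¹ := by
    rw [← intervalIntegral.integral_add hInvInt hRemInt]
    apply intervalIntegral.integral_congr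
    intro x _
    ring
  have hIocEq : (∫ u in Set.Ioc (0:ℝ) 1, Real.exp (-2 * u) * (u + a)⁻¹)
      = ∫ u in (0:ℝ)..1, Real.exp (-2 * u) * (u + a)⁻¹ :=
    (intervalIntegral.integral_of_le zero_le_one).symm
  rw [hIocEq, hsum, hI1]
  have hlog1 : 0 ≤ Real.log (1 + a) := Real.log_nonneg (by linarith)
  have hlog2 : Real.log (1 + a) ≤ 1 := by
    have := Real.log_le_sub_one_of_pos (show (0:ℝ) < 1 + a by linarith)
    linarith
  rw [abs_le] at hI2 ⊢
  constructor <;> [linarith [hI2.1]; linarith [hI2.2]]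

end FixedA2


section Final

lemma psi_bound {a : ℝ} (ha : 0 < a) (ha1 : a ≤ 1) :
    |(∫ u in Set.Ioi (0:ℝ), u * Real.exp (-2 * u) * ((u + a)⁻¹ - Real.log (u + a)) ^ 2)
      + Real.log a| ≤ (∫ u in Set.Ioi (0:ℝ), domF u) + 5 := by
  have hdecomp : Set.EqOn
      (fun u : ℝ => u * Real.exp (-2 * u) * ((u + a)⁻¹ - Real.log (u + a)) ^ 2)
      (fun u : ℝ => (Real.exp (-2 * u) * (u + a)⁻¹ - a * Real.exp (-2 * u) * ((u + a) ^ 2)⁻¹)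
        + u * Real.exp (-2 * u) * (Real.log (u + a) ^ 2 - 2 * (u + a)⁻¹ * Real.log (u + a)))
      (Set.Ioi 0) := by
    intro u hu
    have hu0 : (0:ℝ) < u := hu
    have hua : u + a ≠ 0 := by positivity
    simp only
    field_simp
    ring
  rw [setIntegral_congr_fun measurableSet_Ioi hdecomp]
  have hPQ : IntegrableOn (fun u : ℝ =>
      Real.exp (-2 * u) * (u + a)⁻¹ - a * Real.exp (-2 * u) * ((u + a) ^ 2)⁻¹)
      (Set.Ioi 0) := (P_integrable ha).sub (Q_integrable ha)
  rw [integral_add hPQ (R_integrable ha ha1),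
    integral_sub (P_integrable ha) (Q_integrable ha)]
  have hQ0 : 0 ≤ ∫ u in Set.Ioi (0:ℝ), a * Real.exp (-2 * u) * ((u + a) ^ 2)⁻¹ := by
    apply setIntegral_nonneg measurableSet_Ioi
    intro u hu
    have : (0:ℝ) < u := hu
    positivity
  have hQ1 := Q_le_one ha
  have hPsplit : (∫ u in Set.Ioi (0:ℝ), Real.exp (-2 * u) * (u + a)⁻¹)
      = (∫ u in Set.Ioc (0:ℝ) 1, Real.exp (-2 * u) * (u + a)⁻¹)
        + ∫ u in Set.Ioi (1:ℝ), Real.exp (-2 * u) * (u + a)⁻¹ := by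
    rw [← setIntegral_union (Set.Ioc_disjoint_Ioi le_rfl) measurableSet_Ioi
      ((P_integrable ha).mono_set Set.Ioc_subset_Ioi_self)
      ((P_integrable ha).mono_set (Set.Ioi_subset_Ioi zero_le_one)),
      Set.Ioc_union_Ioi_eq_Ioi zero_le_one]
  have hhead := P_head_est ha ha1
  have htail0 : 0 ≤ ∫ u in Set.Ioi (1:ℝ), Real.exp (-2 * u) * (u + a)⁻¹ := by
    apply setIntegral_nonneg measurableSet_Ioi
    intro u hu
    have hu1 : (1:ℝ) < u := hu
    have : (0:ℝ) < u := lt_trans one_pos hu1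
    positivity
  have htail1 := P_tail_le_one ha
  have hRabs : |∫ u in Set.Ioi (0:ℝ), u * Real.exp (-2 * u) *
      (Real.log (u + a) ^ 2 - 2 * (u + a)⁻¹ * Real.log (u + a))|
      ≤ ∫ u in Set.Ioi (0:ℝ), domF u := by
    have h1 := norm_integral_le_integral_norm (μ := volume.restrict (Set.Ioi (0:ℝ)))
      (fun u : ℝ => u * Real.exp (-2 * u) *
        (Real.log (u + a) ^ 2 - 2 * (u + a)⁻¹ * Real.log (u + a)))
    rw [Real.norm_eq_abs] at h1
    have h2 : (∫ u in Set.Ioi (0:ℝ), ‖u * Real.exp (-2 * u) *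
        (Real.log (u + a) ^ 2 - 2 * (u + a)⁻¹ * Real.log (u + a))‖)
        ≤ ∫ u in Set.Ioi (0:ℝ), domF u := by
      apply setIntegral_mono_on (R_integrable ha ha1).norm domF_integrable measurableSet_Ioi
      intro u hu
      have hu0 : (0:ℝ) < u := hu
      rw [Real.norm_eq_abs]
      exact R_bound ha ha1 hu0
    exact le_trans h1 h2
  rw [hPsplit]
  rw [abs_le] at hhead hRabs ⊢
  constructor <;> [linarith [hhead.1, hRabs.1]; linarith [hhead.2, hRabs.2]]

lemma deriv_f_eq (L a : ℝ) (hL : 0 < L) {x : ℝ} (hpos : 0 < x / L + a) :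
    deriv (fun t : ℝ => Real.log (t / L + a) * Real.exp (-t / L)) x
      = Real.exp (-x / L) * ((x / L + a)⁻¹ - Real.log (x / L + a)) / L := by
  have h1 : HasDerivAt (fun t : ℝ => t / L + a) (1 / L) x := by
    simpa using ((hasDerivAt_id x).div_const L).add_const a
  have h2 := h1.log (ne_of_gt hpos)
  have h3 : HasDerivAt (fun t : ℝ => Real.exp (-t / L)) (Real.exp (-x / L) * (-1 / L)) x := by
    have := (((hasDerivAt_id x).neg).div_const L).exp
    simpa using this
  have h4 := h2.mul h3
  rw [HasDerivAt.deriv (f := fun t : ℝ => Real.log (t / L + a) * Real.exp (-t / L)) h4]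
  field_simp
  ring

lemma transform (L : ℝ) (hL : 0 < L) (a : ℝ) (ha : 0 < a) :
    (∫ x in Set.Ioi (0:ℝ),
        x * (deriv (fun t : ℝ => Real.log (t / L + a) * Real.exp (-t / L)) x) ^ 2)
      = ∫ u in Set.Ioi (0:ℝ), u * Real.exp (-2 * u) * ((u + a)⁻¹ - Real.log (u + a)) ^ 2 := by
  have hstep : Set.EqOn
      (fun x : ℝ => x * (deriv (fun t : ℝ => Real.log (t / L + a) * Real.exp (-t / L)) x) ^ 2)
      (fun x : ℝ => L⁻¹ *
        ((fun u : ℝ => u * Real.exp (-2 * u) * ((u + a)⁻¹ - Real.log (u + a)) ^ 2) (L⁻¹ * x)))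
      (Set.Ioi 0) := by
    intro x hx
    have hx0 : (0:ℝ) < x := hx
    have hpos : 0 < x / L + a := by positivity
    simp only
    rw [deriv_f_eq L a hL hpos]
    have hux : L⁻¹ * x = x / L := inv_mul_eq_div L x
    rw [hux]
    have hE : Real.exp (-2 * (x / L)) = Real.exp (-x / L) * Real.exp (-x / L) := by
      rw [← Real.exp_add]
      congr 1
      ring
    rw [hE]
    field_simp
  rw [setIntegral_congr_fun measurableSet_Ioi hstep]
  rw [MeasureTheory.integral_const_mul]
  rw [integral_comp_mul_left_Ioi
    (fun u : ℝ => u * Real.exp (-2 * u) * ((u + a)⁻¹ - Real.log (u + a)) ^ 2) 0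
    (inv_pos.mpr hL), mul_zero, smul_eq_mul, inv_inv, ← mul_assoc,
    inv_mul_cancel₀ (ne_of_gt hL), one_mul]

end Final

end IntegralDerivAux

open IntegralDerivAux

/-- For `L > 0` and the family `f_a(x) = log(x/L + a) · exp(-x/L)`, the integral
`∫₀^∞ x f_a′(x)² dx` equals `-log a + O(1)` as `a → 0⁺`: there are constants
`C, a₀ > 0` such that for all `0 < a < a₀`,
`|∫₀^∞ x f_a′(x)² dx + log a| ≤ C`. -/
theorem integral_x_deriv_sq_eq_neg_log_add_O_one (L : ℝ) (hL : 0 < L) :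
    ∃ C a₀ : ℝ, 0 < C ∧ 0 < a₀ ∧ ∀ a : ℝ, 0 < a → a < a₀ →
      |(∫ x in Set.Ioi (0 : ℝ),
          x * (deriv (fun t : ℝ => Real.log (t / L + a) * Real.exp (-t / L)) x) ^ 2)
        + Real.log a| ≤ C := by
  refine ⟨(∫ u in Set.Ioi (0:ℝ), IntegralDerivAux.domF u) + 5, 1, ?_, one_pos, ?_⟩
  · have h0 : 0 ≤ ∫ u in Set.Ioi (0:ℝ), IntegralDerivAux.domF u := by
      apply setIntegral_nonneg measurableSet_Ioi
      intro u hu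
      exact IntegralDerivAux.domF_nonneg hu
    linarith
  · intro a ha ha1
    rw [IntegralDerivAux.transform L hL a ha]
    exact IntegralDerivAux.psi_bound ha ha1.le
end

section
/- Let λ ∈ ℝ. Suppose that for every real Schwartz function f on ℝ with f(0) ≠ 0 one has 0 ≤ λ + π · (∫₀^∞ x f′(x)² dx) / f(0)². Then λ ≥ 0. -/
open MeasureTheory

noncomputable def schwartzOfCompactSupport (f : ℝ → ℝ) (hf : ContDiff ℝ ((⊤ : ℕ∞) : WithTop ℕ∞) f)
    (hsupp : HasCompactSupport f) : SchwartzMap ℝ ℝ where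
  toFun := f
  smooth' := hf
  decay' := by
    intro k n
    have hcont : Continuous fun x : ℝ => ‖x‖ ^ k * ‖iteratedFDeriv ℝ n f x‖ :=
      (continuous_norm.pow k).mul (hf.continuous_iteratedFDeriv (mod_cast le_top)).norm
    have hcs : HasCompactSupport fun x : ℝ => ‖x‖ ^ k * ‖iteratedFDeriv ℝ n f x‖ := by
      apply HasCompactSupport.mul_left
      exact (hsupp.iteratedFDeriv n).norm
    obtain ⟨C, hC⟩ := hcont.bounded_above_of_compact_support hcs
    exact ⟨C, fun x => by simpa [abs_of_nonneg (mul_nonneg (pow_nonneg (norm_nonneg _) _) (norm_nonneg _))] using hC x⟩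

@[simp] lemma schwartzOfCompactSupport_apply (f : ℝ → ℝ) (hf) (hsupp) (x : ℝ) :
    schwartzOfCompactSupport f hf hsupp x = f x := rfl

noncomputable def bmp : ContDiffBump (0:ℝ) := ⟨1, 2, one_pos, one_lt_two⟩

noncomputable def innerF (T : ℝ) : ℝ → ℝ := fun x => Real.log (1 + x ^ 2) / T

noncomputable def fT (T : ℝ) : ℝ → ℝ := fun x => bmp (innerF T x)

lemma one_add_sq_pos (x : ℝ) : (0:ℝ) < 1 + x ^ 2 := by positivity

lemma innerF_contDiff (T : ℝ) {n : WithTop ℕ∞} : ContDiff ℝ n (innerF T) :=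
  ((contDiff_const.add (contDiff_id.pow 2)).log
    (fun x => (one_add_sq_pos x).ne')).div_const T

lemma fT_contDiff (T : ℝ) {n : ℕ∞} : ContDiff ℝ n (fT T) :=
  bmp.contDiff.comp (innerF_contDiff T)

lemma fT_zero (T : ℝ) : fT T 0 = 1 := by
  have : innerF T 0 = 0 := by simp [innerF]
  rw [fT, this]
  exact bmp.one_of_mem_closedBall (by simp [bmp])

lemma innerF_hasDerivAt (T : ℝ) (x : ℝ) :
    HasDerivAt (innerF T) (2 * x / (1 + x ^ 2) / T) x := by
  have h1 : HasDerivAt (fun x : ℝ => 1 + x ^ 2) (2 * x) x := by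
    simpa using (hasDerivAt_pow 2 x).const_add 1
  have h2 := (h1.log (one_add_sq_pos x).ne')
  exact h2.div_const T

lemma fT_hasDerivAt (T : ℝ) (x : ℝ) :
    HasDerivAt (fT T) (deriv (⇑bmp) (innerF T x) * (2 * x / (1 + x ^ 2) / T)) x := by
  have hb : HasDerivAt (⇑bmp) (deriv (⇑bmp) (innerF T x)) (innerF T x) :=
    ((bmp.contDiffAt (n := 1)).differentiableAt (by simp)).hasDerivAt
  exact hb.comp x (innerF_hasDerivAt T x)

lemma fT_deriv (T : ℝ) (x : ℝ) :
    deriv (fT T) x = deriv (⇑bmp) (innerF T x) * (2 * x / (1 + x ^ 2) / T) :=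
  (fT_hasDerivAt T x).deriv

lemma innerF_nonneg {T x : ℝ} (hT : 0 < T) : 0 ≤ innerF T x := by
  apply div_nonneg _ hT.le
  apply Real.log_nonneg; nlinarith [sq_nonneg x]

lemma innerF_gt_two {T x : ℝ} (hT : 0 < T) (hx : Real.exp T < |x|) : 2 < innerF T x := by
  have h1 : Real.exp (2 * T) < 1 + x ^ 2 := by
    have := Real.exp_pos T
    have hsq : Real.exp T ^ 2 < |x| ^ 2 := by nlinarith
    rw [two_mul, Real.exp_add]
    nlinarith [sq_abs x]
  have h2 : 2 * T < Real.log (1 + x ^ 2) :=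
    (Real.lt_log_iff_exp_lt (one_add_sq_pos x)).2 h1
  rw [innerF, lt_div_iff₀ hT]; linarith

lemma fT_eq_zero_of_gt {T x : ℝ} (hT : 0 < T) (h : 2 < innerF T x) : fT T x = 0 := by
  apply bmp.zero_of_le_dist
  rw [Real.dist_eq, sub_zero]
  have := innerF_nonneg (x := x) hT
  show (2:ℝ) ≤ |innerF T x|
  rw [abs_of_nonneg this]; linarith

lemma fT_hasCompactSupport {T : ℝ} (hT : 0 < T) : HasCompactSupport (fT T) := by
  apply HasCompactSupport.of_support_subset_isCompact
    (isCompact_Icc (a := -(Real.exp T)) (b := Real.exp T))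
  intro x hx
  by_contra hmem
  have habs : Real.exp T < |x| := by
    rcases abs_cases x with ⟨h1, _⟩ | ⟨h1, _⟩ <;>
      (simp only [Set.mem_Icc, not_and_or, not_le] at hmem; rcases hmem with hm | hm <;> linarith)
  exact hx (fT_eq_zero_of_gt hT (innerF_gt_two hT habs))

lemma innerF_continuous (T : ℝ) : Continuous (innerF T) :=
  (innerF_contDiff T (n := 0)).continuous

lemma deriv_fT_eq_zero_of_lt {T x : ℝ} (hT : 0 < T) (h : innerF T x < 1) :
    deriv (fT T) x = 0 := by
  have hopen : IsOpen {y : ℝ | innerF T y < 1} :=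
    isOpen_lt (innerF_continuous T) continuous_const
  have heq : fT T =ᶠ[nhds x] fun _ => (1:ℝ) := by
    filter_upwards [hopen.mem_nhds h] with y hy
    exact bmp.one_of_mem_closedBall (by
      simp only [Metric.mem_closedBall, Real.dist_eq, sub_zero]
      rw [abs_of_nonneg (innerF_nonneg hT)]
      show innerF T y ≤ bmp.rIn
      exact le_of_lt hy)
  rw [heq.deriv_eq]; exact deriv_const x 1

lemma deriv_fT_eq_zero_of_gt {T x : ℝ} (hT : 0 < T) (h : 2 < innerF T x) :
    deriv (fT T) x = 0 := by
  have hopen : IsOpen {y : ℝ | 2 < innerF T y} :=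
    isOpen_lt continuous_const (innerF_continuous T)
  have heq : fT T =ᶠ[nhds x] fun _ => (0:ℝ) := by
    filter_upwards [hopen.mem_nhds h] with y hy
    exact fT_eq_zero_of_gt hT hy
  rw [heq.deriv_eq]; exact deriv_const x 0

lemma exists_bound : ∃ C : ℝ, 0 ≤ C ∧ ∀ u, |deriv (⇑bmp) u| ≤ C := by
  obtain ⟨C, hC⟩ :=
    ((bmp.contDiff (n := 2)).continuous_deriv (by norm_num)).bounded_above_of_compact_support
      bmp.hasCompactSupport.deriv
  exact ⟨max C 0, le_max_right _ _, fun u =>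
    le_trans (by simpa [Real.norm_eq_abs] using hC u) (le_max_left _ _)⟩

noncomputable def Cb : ℝ := exists_bound.choose

lemma Cb_nonneg : 0 ≤ Cb := exists_bound.choose_spec.1

lemma Cb_spec (u : ℝ) : |deriv (⇑bmp) u| ≤ Cb := exists_bound.choose_spec.2 u

lemma innerF_lt_one {T x : ℝ} (hT : 1 ≤ T) (hx2 : x < 1) (hx0 : 0 < x) :
    innerF T x < 1 := by
  have hT0 : 0 < T := lt_of_lt_of_le one_pos hT
  rw [innerF, div_lt_one hT0]
  have h2 : 1 + x ^ 2 < 2 := by nlinarith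
  have h3 : (2:ℝ) < Real.exp 1 := by
    have := Real.add_one_lt_exp (by norm_num : (1:ℝ) ≠ 0)
    linarith
  have h4 : Real.exp 1 ≤ Real.exp T := Real.exp_le_exp.2 hT
  calc Real.log (1 + x ^ 2) < Real.log (Real.exp T) :=
        Real.log_lt_log (one_add_sq_pos x) (by linarith)
    _ = T := Real.log_exp T

lemma integrand_le {T x : ℝ} (hT : 1 ≤ T) (hx : 0 < x) :
    x * (deriv (fT T) x) ^ 2 ≤
      Set.indicator (Set.Icc 1 (Real.exp T)) (fun y => 4 * Cb ^ 2 / T ^ 2 * (1 / y)) x := by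
  have hT0 : 0 < T := lt_of_lt_of_le one_pos hT
  by_cases hmem : x ∈ Set.Icc 1 (Real.exp T)
  · rw [Set.indicator_of_mem hmem, fT_deriv]
    set D := deriv (⇑bmp) (innerF T x) with hD
    have hD2 : D ^ 2 ≤ Cb ^ 2 := by
      have := Cb_spec (innerF T x)
      nlinarith [abs_nonneg D, sq_abs D]
    have hA : x * (2 * x / (1 + x ^ 2) / T) ^ 2 ≤ 4 / T ^ 2 * (1 / x) := by
      have h1 : x * (2 * x / (1 + x ^ 2) / T) ^ 2 = 4 * x ^ 3 / ((1 + x ^ 2) ^ 2 * T ^ 2) := by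
        field_simp; ring
      have h2 : 4 / T ^ 2 * (1 / x) = 4 / (T ^ 2 * x) := by ring
      rw [h1, h2, div_le_div_iff₀ (by positivity) (by positivity)]
      nlinarith [sq_nonneg (x * T), sq_nonneg T, sq_nonneg (x ^ 2 * T)]
    have hA0 : 0 ≤ x * (2 * x / (1 + x ^ 2) / T) ^ 2 := by positivity
    calc x * (D * (2 * x / (1 + x ^ 2) / T)) ^ 2
        = D ^ 2 * (x * (2 * x / (1 + x ^ 2) / T) ^ 2) := by ring
      _ ≤ Cb ^ 2 * (4 / T ^ 2 * (1 / x)) :=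
          mul_le_mul hD2 hA hA0 (by positivity)
      _ = 4 * Cb ^ 2 / T ^ 2 * (1 / x) := by ring
  · rw [Set.indicator_of_notMem hmem]
    have hd : deriv (fT T) x = 0 := by
      rcases not_and_or.1 (Set.mem_Icc.not.1 hmem) with hm | hm
      · exact deriv_fT_eq_zero_of_lt hT0 (innerF_lt_one hT (not_le.1 hm) hx)
      · refine deriv_fT_eq_zero_of_gt hT0 (innerF_gt_two hT0 ?_)
        rw [abs_of_pos hx]; exact not_le.1 hm
    rw [hd]; simp

lemma integrand_integrable {T : ℝ} (hT : 0 < T) :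
    IntegrableOn (fun x => x * (deriv (fT T) x) ^ 2) (Set.Ioi (0:ℝ)) := by
  have hcont : Continuous (fun x => x * (deriv (fT T) x) ^ 2) :=
    continuous_id.mul (((fT_contDiff T (n := 2)).continuous_deriv
      (by exact_mod_cast one_le_two)).pow 2)
  have hcs : HasCompactSupport (fun x => x * (deriv (fT T) x) ^ 2) := by
    apply HasCompactSupport.mul_left
    exact (fT_hasCompactSupport hT).deriv.comp_left (g := fun t : ℝ => t ^ 2) (by simp)
  exact (hcont.integrable_of_hasCompactSupport hcs).integrableOn

lemma indicator_integrable {T : ℝ} (hT : 1 ≤ T) :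
    Integrable (Set.indicator (Set.Icc 1 (Real.exp T))
      (fun y => 4 * Cb ^ 2 / T ^ 2 * (1 / y))) := by
  apply MeasureTheory.IntegrableOn.integrable_indicator _ measurableSet_Icc
  apply ContinuousOn.integrableOn_compact isCompact_Icc
  apply continuousOn_const.mul
  apply continuousOn_const.div continuousOn_id
  intro y hy
  have h1 : (1:ℝ) ≤ y := hy.1
  exact fun h => by simp only [id_eq] at h; linarith

lemma indicator_integral {T : ℝ} (hT : 1 ≤ T) :
    ∫ x in Set.Ioi (0:ℝ), Set.indicator (Set.Icc 1 (Real.exp T))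
      (fun y => 4 * Cb ^ 2 / T ^ 2 * (1 / y)) x = 4 * Cb ^ 2 / T := by
  have hT0 : 0 < T := lt_of_lt_of_le one_pos hT
  have h1e : (1:ℝ) ≤ Real.exp T := Real.one_le_exp hT0.le
  rw [setIntegral_indicator measurableSet_Icc]
  have hss : Set.Ioi (0:ℝ) ∩ Set.Icc 1 (Real.exp T) = Set.Icc 1 (Real.exp T) := by
    apply Set.inter_eq_self_of_subset_right
    intro y hy; exact lt_of_lt_of_le one_pos hy.1
  rw [hss, MeasureTheory.integral_Icc_eq_integral_Ioc,
    ← intervalIntegral.integral_of_le h1e, intervalIntegral.integral_const_mul,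
    integral_one_div (by
      intro hmem
      rcases Set.mem_uIcc.1 hmem with ⟨h1, _⟩ | ⟨_, h2⟩ <;> linarith)]
  rw [div_one, Real.log_exp]
  field_simp

lemma integral_bound {T : ℝ} (hT : 1 ≤ T) :
    ∫ x in Set.Ioi (0:ℝ), x * (deriv (fT T) x) ^ 2 ≤ 4 * Cb ^ 2 / T := by
  have hT0 : 0 < T := lt_of_lt_of_le one_pos hT
  calc ∫ x in Set.Ioi (0:ℝ), x * (deriv (fT T) x) ^ 2
      ≤ ∫ x in Set.Ioi (0:ℝ), Set.indicator (Set.Icc 1 (Real.exp T))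
          (fun y => 4 * Cb ^ 2 / T ^ 2 * (1 / y)) x :=
        setIntegral_mono_on (integrand_integrable hT0)
          ((indicator_integrable hT).integrableOn) measurableSet_Ioi
          (fun x hx => integrand_le hT hx)
    _ = 4 * Cb ^ 2 / T := indicator_integral hT

lemma integral_nonneg' {T : ℝ} :
    0 ≤ ∫ x in Set.Ioi (0:ℝ), x * (deriv (fT T) x) ^ 2 :=
  setIntegral_nonneg measurableSet_Ioi (fun x hx => by
    have : (0:ℝ) < x := hx
    positivity)

/-- If `λ` satisfies, for every real Schwartz function `f` on `ℝ` with `f 0 ≠ 0`,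
`0 ≤ λ + π (∫₀^∞ x f′(x)² dx) / f(0)²`, then `λ ≥ 0`. -/
theorem lambda_nonneg_of_positivity (lam : ℝ)
    (h : ∀ f : SchwartzMap ℝ ℝ, f 0 ≠ 0 →
      0 ≤ lam + Real.pi *
        (∫ x in Set.Ioi (0 : ℝ), x * (deriv (fun t : ℝ => f t) x) ^ 2) / (f 0) ^ 2) :
    0 ≤ lam := by
  by_contra hneg
  push_neg at hneg
  have hpos : 0 < -lam := by linarith
  set T : ℝ := max 1 (4 * Real.pi * Cb ^ 2 / (-lam) + 1) with hTdef
  have hT1 : (1:ℝ) ≤ T := le_max_left _ _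
  have hT0 : 0 < T := lt_of_lt_of_le one_pos hT1
  have hkey : 4 * Real.pi * Cb ^ 2 < (-lam) * T := by
    have h1 : 4 * Real.pi * Cb ^ 2 / (-lam) + 1 ≤ T := le_max_right _ _
    have h2 : (-lam) * (4 * Real.pi * Cb ^ 2 / (-lam) + 1) ≤ (-lam) * T :=
      mul_le_mul_of_nonneg_left h1 hpos.le
    have h3 : (-lam) * (4 * Real.pi * Cb ^ 2 / (-lam) + 1)
        = 4 * Real.pi * Cb ^ 2 + (-lam) := by
      rw [mul_add, mul_one, mul_div_cancel₀ _ hpos.ne']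
    linarith
  set F : SchwartzMap ℝ ℝ :=
    schwartzOfCompactSupport (fT T) (fT_contDiff T) (fT_hasCompactSupport hT0) with hFdef
  have hF0 : F 0 = 1 := by
    rw [hFdef, schwartzOfCompactSupport_apply]; exact fT_zero T
  have hfun : (fun t : ℝ => F t) = fT T := by
    funext t; rw [hFdef, schwartzOfCompactSupport_apply]
  have hh := h F (by rw [hF0]; norm_num)
  rw [hfun, hF0] at hh
  have hI1 := integral_bound hT1
  have hI0 := integral_nonneg' (T := T)
  set I : ℝ := ∫ x in Set.Ioi (0:ℝ), x * (deriv (fT T) x) ^ 2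
  have hπ : Real.pi * I ≤ Real.pi * (4 * Cb ^ 2 / T) :=
    mul_le_mul_of_nonneg_left hI1 Real.pi_pos.le
  have hlt : Real.pi * (4 * Cb ^ 2 / T) < -lam := by
    have heq : Real.pi * (4 * Cb ^ 2 / T) = (4 * Real.pi * Cb ^ 2) / T := by ring
    rw [heq, div_lt_iff₀ hT0]
    linarith [hkey]
  have : 0 ≤ lam + Real.pi * I := by
    have : ((1:ℝ)) ^ 2 = 1 := one_pow 2
    calc (0:ℝ) ≤ lam + Real.pi * I / 1 ^ 2 := hh
      _ = lam + Real.pi * I := by norm_num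
  linarith
end

section
/- Let g : ℝ → ℝ be a Schwartz function with g(0) = 0, let g_R(x) = g(x)·Θ(x) with Θ the Heaviside step, and let g_R^ε(x) = g(x)·Θ_ε(x) where Θ_ε is a fixed smooth step function equal to 0 for x ≤ ε/2, equal to 1 for x ≥ ε, and satisfying sup|Θ_ε′| = 4/ε. Then g_R ∈ H¹(ℝ) and g_R^ε → g_R in H¹(ℝ) as ε → 0⁺. -/
open MeasureTheory Filter

section CutoffHelpers

lemma cutoff_schwartz_bound (f : SchwartzMap ℝ ℝ) : ∃ C : ℝ, 0 ≤ C ∧ ∀ x, |f x| ≤ C := by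
  obtain ⟨C, hC0, hC⟩ := f.decay 0 0
  exact ⟨C, hC0.le, fun x => by simpa [norm_iteratedFDeriv_zero] using hC x⟩

lemma cutoff_schwartz_memL2 (f : SchwartzMap ℝ ℝ) : MemLp f 2 (volume : Measure ℝ) := by
  rw [memLp_two_iff_integrable_sq f.continuous.aestronglyMeasurable]
  obtain ⟨C, hC0, hC⟩ := cutoff_schwartz_bound f
  refine ((f.integrable (μ := volume)).norm.const_mul C).mono'
    (f.continuous.pow 2).aestronglyMeasurable (Eventually.of_forall fun x => ?_)
  have h : |f x * f x| ≤ C * |f x| := by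
    rw [abs_mul]
    exact mul_le_mul_of_nonneg_right (hC x) (abs_nonneg _)
  simpa [pow_two, Real.norm_eq_abs, abs_mul] using h

lemma cutoff_lipschitz_aux (f : ℝ → ℝ) (hf : Differentiable ℝ f) {C : ℝ}
    (hC : ∀ x, |deriv f x| ≤ C) : ∀ x y : ℝ, |f y - f x| ≤ C * |y - x| := by
  intro x y
  have h := Convex.norm_image_sub_le_of_norm_deriv_le (s := Set.univ)
    (fun z _ => hf.differentiableAt) (fun z _ => hC z) convex_univ
    (Set.mem_univ x) (Set.mem_univ y)
  simpa [Real.norm_eq_abs] using h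

lemma cutoff_weak_deriv_aux (g : SchwartzMap ℝ ℝ) (hg0 : g 0 = 0) (φ : ℝ → ℝ)
    (hφ : ContDiff ℝ (⊤ : ℕ∞) φ) (hφc : HasCompactSupport φ) :
    ∫ x in Set.Ioi (0:ℝ), g x * deriv φ x = -∫ x in Set.Ioi (0:ℝ), deriv g x * φ x := by
  have hg' : ((SchwartzMap.derivCLM ℝ ℝ g : SchwartzMap ℝ ℝ) : ℝ → ℝ) = deriv g :=
    funext fun x => SchwartzMap.derivCLM_apply ℝ g x
  have hgdc : Continuous (deriv g) := hg' ▸ (SchwartzMap.derivCLM ℝ ℝ g).continuous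
  set f : ℝ → ℝ := fun x => g x * φ x with hf
  set F : ℝ → ℝ := fun x => deriv g x * φ x + g x * deriv φ x with hF
  have hφd : Differentiable ℝ φ := hφ.differentiable (by simp)
  have hd : ∀ x, HasDerivAt f (F x) x := fun x =>
    (g.differentiable.differentiableAt.hasDerivAt).mul (hφd.differentiableAt.hasDerivAt)
  have hsupp : HasCompactSupport f := hφc.mul_left
  have hFcont : Continuous F :=
    (hgdc.mul hφ.continuous).add (g.continuous.mul (hφ.continuous_deriv (by simp)))
  have hFeq : F = deriv f := funext fun x => ((hd x).deriv).symm
  have hFsupp : HasCompactSupport F := hFeq ▸ hsupp.deriv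
  have hFint : Integrable F (volume : Measure ℝ) :=
    hFcont.integrable_of_hasCompactSupport hFsupp
  obtain ⟨R, hR⟩ := hsupp.isCompact.bddAbove
  have hfz : ∀ x : ℝ, R < x → f x = 0 := by
    intro x hx
    by_contra h
    exact absurd (hR (subset_tsupport f h)) (not_le.mpr hx)
  have htend : Tendsto f atTop (nhds (0:ℝ)) :=
    tendsto_const_nhds.congr'
      ((eventually_gt_atTop R).mono fun x hx => (hfz x hx).symm)
  have key := integral_Ioi_of_hasDerivAt_of_tendsto (a := (0:ℝ))
    ((g.continuous.mul hφ.continuous).continuousWithinAt)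
    (fun x _ => hd x) hFint.integrableOn htend
  rw [Pi.mul_apply, hg0, zero_mul, sub_zero] at key
  have h1 : IntegrableOn (fun x => deriv g x * φ x) (Set.Ioi (0:ℝ)) volume :=
    ((hgdc.mul hφ.continuous).integrable_of_hasCompactSupport hφc.mul_left).integrableOn
  have h2 : IntegrableOn (fun x => g x * deriv φ x) (Set.Ioi (0:ℝ)) volume :=
    ((g.continuous.mul (hφ.continuous_deriv (by simp))).integrable_of_hasCompactSupport
      (hφc.deriv.mul_left)).integrableOn
  have hsplit : ∫ x in Set.Ioi (0:ℝ), F x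
      = (∫ x in Set.Ioi (0:ℝ), deriv g x * φ x) + ∫ x in Set.Ioi (0:ℝ), g x * deriv φ x :=
    integral_add h1 h2
  rw [key] at hsplit
  linarith

lemma cutoff_eLpNorm_le_ind {f : ℝ → ℝ} {c ε : ℝ} (hc : 0 ≤ c)
    (h : ∀ x, |f x| ≤ (Set.Icc (0:ℝ) ε).indicator (fun _ => c) x) :
    eLpNorm f 2 (volume : Measure ℝ) ≤ ENNReal.ofReal c * ENNReal.ofReal ε ^ (1/2 : ℝ) := by
  have h1 : eLpNorm f 2 (volume : Measure ℝ)
      ≤ eLpNorm ((Set.Icc (0:ℝ) ε).indicator (fun _ => c)) 2 volume :=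
    eLpNorm_mono_real h
  rw [eLpNorm_indicator_const measurableSet_Icc (by norm_num) (by norm_num)] at h1
  refine h1.trans_eq ?_
  rw [Real.volume_Icc, sub_zero]
  congr 1
  simp [Real.enorm_eq_ofReal hc, ENNReal.ofReal, Real.toNNReal, ← norm_toNNReal, Real.norm_eq_abs, abs_of_nonneg hc]

end CutoffHelpers

/-- Let `g` be a real Schwartz function with `g(0) = 0`, let
`g_R(x) = g(x)Θ(x)` with `Θ` the Heaviside step, and `g_R^ε(x) = g(x)Θ_ε(x)`
where `Θ_ε` is a fixed smooth step equal to `0` for `x ≤ ε/2`, to `1` for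
`x ≥ ε`, with `sup|Θ_ε′| = 4/ε`.  Then `g_R ∈ H¹(ℝ)` (it is in `L²` and has a
weak derivative `u ∈ L²`) and `g_R^ε → g_R` in `H¹(ℝ)` as `ε → 0⁺`. -/
theorem cutoff_converges_in_H1 (g : SchwartzMap ℝ ℝ) (hg0 : g 0 = 0)
    (Θ : ℝ → ℝ → ℝ)
    (hΘsmooth : ∀ ε : ℝ, 0 < ε → ContDiff ℝ (⊤ : ℕ∞) (Θ ε))
    (hΘ0 : ∀ ε : ℝ, 0 < ε → ∀ x : ℝ, x ≤ ε / 2 → Θ ε x = 0)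
    (hΘ1 : ∀ ε : ℝ, 0 < ε → ∀ x : ℝ, ε ≤ x → Θ ε x = 1)
    (hΘd : ∀ ε : ℝ, 0 < ε → (⨆ x : ℝ, |deriv (Θ ε) x|) = 4 / ε) :
    ∃ u : ℝ → ℝ,
      MemLp (fun x : ℝ => g x * (if 0 ≤ x then 1 else 0)) 2 (volume : Measure ℝ) ∧
      (∀ φ : ℝ → ℝ, ContDiff ℝ (⊤ : ℕ∞) φ → HasCompactSupport φ →
        ∫ x : ℝ, (g x * (if 0 ≤ x then 1 else 0)) * deriv φ x = -∫ x : ℝ, u x * φ x) ∧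
      MemLp u 2 (volume : Measure ℝ) ∧
      Tendsto (fun ε : ℝ =>
          eLpNorm (fun x : ℝ => g x * Θ ε x - g x * (if 0 ≤ x then 1 else 0)) 2
            (volume : Measure ℝ)
          + eLpNorm (fun x : ℝ => deriv (fun t : ℝ => g t * Θ ε t) x - u x) 2
            (volume : Measure ℝ))
        (nhdsWithin 0 (Set.Ioi 0)) (nhds 0) := by
  have hg' : ((SchwartzMap.derivCLM ℝ ℝ g : SchwartzMap ℝ ℝ) : ℝ → ℝ) = deriv g :=
    funext fun x => SchwartzMap.derivCLM_apply ℝ g x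
  obtain ⟨C, hC0, hCb⟩ := cutoff_schwartz_bound (SchwartzMap.derivCLM ℝ ℝ g)
  have hC : ∀ x, |deriv g x| ≤ C := fun x => by
    have := hCb x; rwa [SchwartzMap.derivCLM_apply] at this
  have hglip : ∀ x : ℝ, |g x| ≤ C * |x| := by
    intro x
    have h := cutoff_lipschitz_aux g g.differentiable hC 0 x
    simpa [hg0] using h
  have hm : Measurable (fun x:ℝ => if (0:ℝ) ≤ x then (1:ℝ) else 0) :=
    Measurable.ite measurableSet_Ici measurable_const measurable_const
  have hindb : ∀ x : ℝ, |(if (0:ℝ) ≤ x then (1:ℝ) else 0)| ≤ 1 := by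
    intro x; split <;> norm_num
  refine ⟨fun x => deriv g x * (if 0 ≤ x then 1 else 0), ?_, ?_, ?_, ?_⟩
  · -- Memℒp of g * 𝟙
    refine (cutoff_schwartz_memL2 g).of_le
      (g.continuous.aestronglyMeasurable.mul hm.aestronglyMeasurable)
      (Eventually.of_forall fun x => ?_)
    rw [Real.norm_eq_abs, Real.norm_eq_abs, abs_mul]
    calc |g x| * |(if (0:ℝ) ≤ x then (1:ℝ) else 0)| ≤ |g x| * 1 :=
          mul_le_mul_of_nonneg_left (hindb x) (abs_nonneg _)
      _ = |g x| := mul_one _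
  · -- weak derivative identity
    intro φ hφ hφc
    have e1 : (fun x:ℝ => (g x * (if 0 ≤ x then 1 else 0)) * deriv φ x)
        = (Set.Ici (0:ℝ)).indicator (fun x => g x * deriv φ x) := by
      funext x
      by_cases h : (0:ℝ) ≤ x <;> simp [Set.indicator_apply, h]
    have e2 : (fun x:ℝ => (deriv g x * (if 0 ≤ x then 1 else 0)) * φ x)
        = (Set.Ici (0:ℝ)).indicator (fun x => deriv g x * φ x) := by
      funext x
      by_cases h : (0:ℝ) ≤ x <;> simp [Set.indicator_apply, h]
    rw [e1, e2, integral_indicator measurableSet_Ici, integral_indicator measurableSet_Ici,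
      integral_Ici_eq_integral_Ioi, integral_Ici_eq_integral_Ioi]
    exact cutoff_weak_deriv_aux g hg0 φ hφ hφc
  · -- Memℒp of u
    refine (cutoff_schwartz_memL2 (SchwartzMap.derivCLM ℝ ℝ g)).of_le
      (((hg' ▸ (SchwartzMap.derivCLM ℝ ℝ g).continuous :
          Continuous (deriv g))).aestronglyMeasurable.mul hm.aestronglyMeasurable)
      (Eventually.of_forall fun x => ?_)
    rw [Real.norm_eq_abs, Real.norm_eq_abs, abs_mul, SchwartzMap.derivCLM_apply]
    calc |deriv g x| * |(if (0:ℝ) ≤ x then (1:ℝ) else 0)| ≤ |deriv g x| * 1 :=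
          mul_le_mul_of_nonneg_left (hindb x) (abs_nonneg _)
      _ = |deriv g x| := mul_one _
  · -- convergence
    have hstep : ∀ ε : ℝ, 0 < ε →
        (∀ x, |deriv (Θ ε) x| ≤ 4/ε) ∧ (∀ x, x ≤ ε → |Θ ε x| ≤ 2) ∧
        (∀ x, x < ε/2 → deriv (Θ ε) x = 0) ∧ (∀ x, ε < x → deriv (Θ ε) x = 0) := by
      intro ε hε
      have hbdd : BddAbove (Set.range fun x => |deriv (Θ ε) x|) := by
        by_contra h
        have h0 := Real.iSup_of_not_bddAbove h
        rw [hΘd ε hε] at h0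
        have : (0:ℝ) < 4/ε := by positivity
        linarith
      have hd : ∀ x, |deriv (Θ ε) x| ≤ 4/ε := fun x =>
        (le_ciSup hbdd x).trans_eq (hΘd ε hε)
      have hdiff : Differentiable ℝ (Θ ε) := (hΘsmooth ε hε).differentiable (by simp)
      have hlip := cutoff_lipschitz_aux (Θ ε) hdiff hd
      refine ⟨hd, fun x hx => ?_, fun x hx => ?_, fun x hx => ?_⟩
      · rcases le_or_gt x (ε/2) with h|h
        · rw [hΘ0 ε hε x h]; norm_num
        · have h2 := hlip (ε/2) x
          rw [hΘ0 ε hε (ε/2) le_rfl, sub_zero] at h2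
          rw [abs_of_nonneg (by linarith : (0:ℝ) ≤ x - ε/2)] at h2
          have h3 : (4/ε) * (x - ε/2) ≤ (4/ε) * (ε/2) :=
            mul_le_mul_of_nonneg_left (by linarith) (by positivity)
          have h4 : (4/ε) * (ε/2) = 2 := by field_simp; ring
          linarith
      · have hev : Θ ε =ᶠ[nhds x] fun _ => (0:ℝ) :=
          Filter.eventuallyEq_of_mem (Iio_mem_nhds hx) (fun y hy => hΘ0 ε hε y (le_of_lt hy))
        rw [hev.deriv_eq, deriv_const]
      · have hev : Θ ε =ᶠ[nhds x] fun _ => (1:ℝ) :=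
          Filter.eventuallyEq_of_mem (Ioi_mem_nhds hx) (fun y hy => hΘ1 ε hε y (le_of_lt hy))
        rw [hev.deriv_eq, deriv_const]
    -- squeeze
    have hofReal : Tendsto (fun ε : ℝ => ENNReal.ofReal ε)
        (nhdsWithin 0 (Set.Ioi 0)) (nhds 0) := by
      have h := (ENNReal.continuous_ofReal.tendsto 0).mono_left
        (nhdsWithin_le_nhds (s := Set.Ioi (0:ℝ)))
      simpa using h
    have hFt : Tendsto (fun ε : ℝ =>
        (ENNReal.ofReal (3*C) + ENNReal.ofReal (7*C)) * ENNReal.ofReal ε ^ (1/2 : ℝ))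
        (nhdsWithin 0 (Set.Ioi 0)) (nhds 0) :=
      (ENNReal.tendsto_const_mul_rpow_nhds_zero_of_pos
        (ENNReal.add_ne_top.mpr ⟨ENNReal.ofReal_ne_top, ENNReal.ofReal_ne_top⟩)
        (by norm_num : (0:ℝ) < 1/2)).comp hofReal
    refine tendsto_of_tendsto_of_tendsto_of_le_of_le'
      (tendsto_const_nhds : Tendsto (fun _ : ℝ => (0:ENNReal)) (nhdsWithin 0 (Set.Ioi 0)) (nhds 0)) hFt
      (Eventually.of_forall fun ε => zero_le) ?_
    have hlt1 : ∀ᶠ ε : ℝ in nhdsWithin 0 (Set.Ioi 0), ε < 1 :=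
      Filter.Eventually.filter_mono nhdsWithin_le_nhds (eventually_lt_nhds zero_lt_one)
    filter_upwards [self_mem_nhdsWithin, hlt1] with ε hε hε1
    have hε : (0:ℝ) < ε := hε
    obtain ⟨hθd, hθ2, hθl, hθr⟩ := hstep ε hε
    have hθdiff : Differentiable ℝ (Θ ε) := (hΘsmooth ε hε).differentiable (by simp)
    have hprod : ∀ x, deriv (fun t => g t * Θ ε t) x
        = deriv g x * Θ ε x + g x * deriv (Θ ε) x := fun x =>
      ((g.differentiable.differentiableAt.hasDerivAt).mul
        (hθdiff.differentiableAt.hasDerivAt)).deriv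
    -- bound 1
    have hb1 : ∀ x : ℝ, |g x * Θ ε x - g x * (if 0 ≤ x then 1 else 0)|
        ≤ (Set.Icc (0:ℝ) ε).indicator (fun _ => 3*C) x := by
      intro x
      rcases lt_or_ge x 0 with hx | hx
      · have hθx : Θ ε x = 0 := hΘ0 ε hε x (by linarith)
        have hxmem : x ∉ Set.Icc (0:ℝ) ε := fun h => absurd h.1 (not_le.mpr hx)
        rw [Set.indicator_of_notMem hxmem, hθx, if_neg (not_le.mpr hx)]
        simp
      · rcases le_or_gt x ε with hxε | hxε
        · rw [Set.indicator_of_mem (Set.mem_Icc.mpr ⟨hx, hxε⟩), if_pos hx]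
          have h1 : g x * Θ ε x - g x * 1 = g x * (Θ ε x - 1) := by ring
          rw [h1, abs_mul]
          have hga : |g x| ≤ C := by
            have := hglip x
            rw [abs_of_nonneg hx] at this
            nlinarith
          have hθa : |Θ ε x - 1| ≤ 3 := by
            have := hθ2 x hxε
            have h := abs_sub_abs_le_abs_sub (Θ ε x) 1
            calc |Θ ε x - 1| ≤ |Θ ε x| + |(1:ℝ)| := abs_sub _ _
              _ ≤ 2 + 1 := by simp [this]
              _ = 3 := by norm_num
          calc |g x| * |Θ ε x - 1| ≤ C * 3 :=
            mul_le_mul hga hθa (abs_nonneg _) hC0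
            _ = 3*C := by ring
        · have hθx : Θ ε x = 1 := hΘ1 ε hε x hxε.le
          have hxmem : x ∉ Set.Icc (0:ℝ) ε := fun h => absurd h.2 (not_le.mpr hxε)
          rw [Set.indicator_of_notMem hxmem, hθx, if_pos hx]
          simp
    -- bound 2
    have hb2 : ∀ x : ℝ, |deriv (fun t => g t * Θ ε t) x
          - deriv g x * (if 0 ≤ x then 1 else 0)|
        ≤ (Set.Icc (0:ℝ) ε).indicator (fun _ => 7*C) x := by
      intro x
      rw [hprod x]
      rcases lt_or_ge x 0 with hx | hx
      · have hθx : Θ ε x = 0 := hΘ0 ε hε x (by linarith)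
        have hdθx : deriv (Θ ε) x = 0 := hθl x (by linarith)
        have hxmem : x ∉ Set.Icc (0:ℝ) ε := fun h => absurd h.1 (not_le.mpr hx)
        rw [Set.indicator_of_notMem hxmem, hθx, hdθx, if_neg (not_le.mpr hx)]
        simp
      · rcases le_or_gt x ε with hxε | hxε
        · rw [Set.indicator_of_mem (Set.mem_Icc.mpr ⟨hx, hxε⟩), if_pos hx]
          have h1 : deriv g x * Θ ε x + g x * deriv (Θ ε) x - deriv g x * 1
              = deriv g x * (Θ ε x - 1) + g x * deriv (Θ ε) x := by ring
          rw [h1]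
          have hθa : |Θ ε x - 1| ≤ 3 := by
            have := hθ2 x hxε
            calc |Θ ε x - 1| ≤ |Θ ε x| + |(1:ℝ)| := abs_sub _ _
              _ ≤ 2 + 1 := by simp [this]
              _ = 3 := by norm_num
          have hga : |g x| ≤ C * ε := by
            have := hglip x
            rw [abs_of_nonneg hx] at this
            nlinarith
          have ht1 : |deriv g x * (Θ ε x - 1)| ≤ C * 3 := by
            rw [abs_mul]
            exact mul_le_mul (hC x) hθa (abs_nonneg _) hC0
          have ht2 : |g x * deriv (Θ ε) x| ≤ 4 * C := by
            rw [abs_mul]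
            calc |g x| * |deriv (Θ ε) x| ≤ (C * ε) * (4/ε) :=
              mul_le_mul hga (hθd x) (abs_nonneg _) (by positivity)
              _ = 4 * C := by field_simp
          calc |deriv g x * (Θ ε x - 1) + g x * deriv (Θ ε) x|
              ≤ |deriv g x * (Θ ε x - 1)| + |g x * deriv (Θ ε) x| := abs_add_le _ _
            _ ≤ C * 3 + 4 * C := add_le_add ht1 ht2
            _ = 7 * C := by ring
        · have hθx : Θ ε x = 1 := hΘ1 ε hε x hxε.le
          have hdθx : deriv (Θ ε) x = 0 := hθr x hxε
          have hxmem : x ∉ Set.Icc (0:ℝ) ε := fun h => absurd h.2 (not_le.mpr hxε)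
          rw [Set.indicator_of_notMem hxmem, hθx, hdθx, if_pos hx]
          simp
    have e1 := cutoff_eLpNorm_le_ind (by positivity : (0:ℝ) ≤ 3*C) hb1
    have e2 := cutoff_eLpNorm_le_ind (by positivity : (0:ℝ) ≤ 7*C) hb2
    calc eLpNorm (fun x : ℝ => g x * Θ ε x - g x * (if 0 ≤ x then 1 else 0)) 2 volume
        + eLpNorm (fun x : ℝ => deriv (fun t : ℝ => g t * Θ ε t) x
            - deriv g x * (if 0 ≤ x then 1 else 0)) 2 volume
        ≤ ENNReal.ofReal (3*C) * ENNReal.ofReal ε ^ (1/2 : ℝ)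
          + ENNReal.ofReal (7*C) * ENNReal.ofReal ε ^ (1/2 : ℝ) := add_le_add e1 e2
      _ = (ENNReal.ofReal (3*C) + ENNReal.ofReal (7*C)) * ENNReal.ofReal ε ^ (1/2 : ℝ) :=
        (add_mul _ _ _).symm
end
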